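/- Let t be a 2×2 matrix over Z_2[u, u^{-1}] with det(t) = 1 and symmetric entries. Then lim_{k→∞} deg(t^{2^k} ξ)/2^k = deg(tr t) for every vector ξ = b·(0,1)ᵀ where b is another such matrix, provided deg(t^{2^{k_0}} ξ) > deg(ξ) for some k_0; in particular the asymptotic growth rate of deg(t^n ξ) is deg(tr t). -/

import Mathlib

open LaurentPolynomial Matrix Filter

/-- The degree of a Laurent polynomial over Z₂: the maximal absolute exponent
with nonzero coefficient (0 for the zero polynomial). -/
noncomputable def polyDeg (p : LaurentPolynomial (ZMod 2)) : ℕ :=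
  (AddMonoidAlgebra.coeff p).support.sup fun x => x.natAbs

/-- The degree of a vector of Laurent polynomials: max over components. -/
noncomputable def vecDeg (ξ : Fin 2 → LaurentPolynomial (ZMod 2)) : ℕ :=
  max (polyDeg (ξ 0)) (polyDeg (ξ 1))

/-- Symmetric entries of a matrix of Laurent polynomials. -/
def SymmEntries (M : Matrix (Fin 2) (Fin 2) (LaurentPolynomial (ZMod 2))) : Prop :=
  ∀ i j, ∀ x : ℤ, AddMonoidAlgebra.coeff (M i j) x = AddMonoidAlgebra.coeff (M i j) (-x)

namespace CqcaAux

open Pointwise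

abbrev L := LaurentPolynomial (ZMod 2)

/-- A symmetric Laurent polynomial. -/
def PSymm (p : L) : Prop := ∀ x : ℤ, p.coeff x = p.coeff (-x)

theorem two_eq_zero : (2 : L) = 0 := by
  have h1 : ((1:L) + 1) = C (1 + 1) := by simp
  have h2 : ((1:ZMod 2)+1) = 0 := rfl
  calc (2:L) = 1 + 1 := by norm_num
    _ = C (1+1) := h1
    _ = 0 := by rw [h2]; simp

/-- Cayley–Hamilton for 2×2 matrices with determinant 1 in characteristic 2. -/
theorem ch (t : Matrix (Fin 2) (Fin 2) L) (hdt : t.det = 1) : t * t = t.trace • t + 1 := by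
  rw [Matrix.det_fin_two] at hdt
  refine Matrix.ext fun i j => ?_
  fin_cases i <;> fin_cases j <;>
    simp [Matrix.mul_apply, Fin.sum_univ_two, Matrix.trace_fin_two, Matrix.one_apply] <;>
    first
      | ring1
      | linear_combination (-1 : L) * hdt + (-1 : L) * two_eq_zero

lemma psymm_iff {p : L} : PSymm p ↔ invert p = p := by
  constructor
  · intro h
    ext x
    rw [invert_apply]
    exact (h x).symm
  · intro h x
    conv_lhs => rw [← h]
    rw [invert_apply]

lemma PSymm.mul {p q : L} (hp : PSymm p) (hq : PSymm q) : PSymm (p*q) :=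
  psymm_iff.mpr (by rw [_root_.map_mul, psymm_iff.mp hp, psymm_iff.mp hq])

lemma PSymm.add {p q : L} (hp : PSymm p) (hq : PSymm q) : PSymm (p+q) :=
  psymm_iff.mpr (by rw [_root_.map_add, psymm_iff.mp hp, psymm_iff.mp hq])

lemma PSymm.pow {p : L} (hp : PSymm p) (n : ℕ) : PSymm (p^n) :=
  psymm_iff.mpr (by rw [_root_.map_pow, psymm_iff.mp hp])

lemma polyDeg_zero : polyDeg 0 = 0 := by simp [polyDeg]

lemma ne_zero_of_polyDeg_pos {p : L} (h : 0 < polyDeg p) : p ≠ 0 := by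
  rintro rfl
  simp [polyDeg] at h

lemma polyDeg_add_le (p q : L) : polyDeg (p+q) ≤ max (polyDeg p) (polyDeg q) := by
  apply Finset.sup_le
  intro x hx
  rcases Finset.mem_union.mp (Finsupp.support_add hx) with h | h
  · exact le_max_of_le_left (Finset.le_sup h)
  · exact le_max_of_le_right (Finset.le_sup h)

lemma polyDeg_mul_le (p q : L) : polyDeg (p*q) ≤ polyDeg p + polyDeg q := by
  apply Finset.sup_le
  intro x hx
  have hm := AddMonoidAlgebra.support_coeff_mul_subset p q hx
  rw [Finset.mem_add] at hm
  obtain ⟨y, hy, z, hz, rfl⟩ := hm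
  calc (y+z).natAbs ≤ y.natAbs + z.natAbs := Int.natAbs_add_le y z
    _ ≤ _ := add_le_add (Finset.le_sup hy) (Finset.le_sup hz)

lemma polyDeg_comb (a p r : L) :
    polyDeg (a*p + r) ≤ max (polyDeg a + polyDeg p) (polyDeg r) :=
  (polyDeg_add_le _ _).trans (max_le_max (polyDeg_mul_le a p) le_rfl)

lemma polyDeg_comb2 (a p c q : L) :
    polyDeg (a*p + c*q) ≤ max (polyDeg a + polyDeg p) (polyDeg c + polyDeg q) :=
  (polyDeg_add_le _ _).trans (max_le_max (polyDeg_mul_le _ _) (polyDeg_mul_le _ _))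

lemma top_coeff_mul (p q : L) {a b : ℤ} (hp : ∀ x ∈ p.coeff.support, x ≤ a)
    (hq : ∀ y ∈ q.coeff.support, y ≤ b) : (p*q).coeff (a+b) = p.coeff a * q.coeff b := by
  classical
  rw [AddMonoidAlgebra.coeff_mul, Finsupp.sum]
  rw [Finset.sum_eq_single a]
  · rw [Finsupp.sum, Finset.sum_eq_single b]
    · simp
    · intro y hy hne
      rw [if_neg]
      have := hq y hy
      omega
    · intro hb
      rw [Finsupp.notMem_support_iff.mp hb]
      simp
  · intro x hx hne
    rw [Finsupp.sum]
    apply Finset.sum_eq_zero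
    intro y hy
    rw [if_neg]
    have h1 := hp x hx
    have h2 := hq y hy
    omega
  · intro ha
    rw [Finsupp.notMem_support_iff.mp ha, Finsupp.sum]
    apply Finset.sum_eq_zero
    intro y hy
    simp

lemma exists_top {p : L} (hp : PSymm p) (h0 : p ≠ 0) :
    p.coeff ((polyDeg p : ℤ)) ≠ 0 ∧ ∀ x ∈ p.coeff.support, x ≤ (polyDeg p : ℤ) := by
  have hne : p.coeff.support.Nonempty := Finsupp.support_nonempty_iff.mpr (by simpa using h0)
  obtain ⟨x₀, hx₀, hmax⟩ := Finset.exists_mem_eq_sup p.coeff.support hne (fun x => x.natAbs)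
  have hd : polyDeg p = x₀.natAbs := hmax
  constructor
  · have hmem : (polyDeg p : ℤ) ∈ p.coeff.support := by
      rcases Int.natAbs_eq x₀ with h | h
      · rw [hd, ← h]; exact hx₀
      · rw [hd]
        have hneg : -x₀ ∈ p.coeff.support := by
          rw [Finsupp.mem_support_iff] at hx₀ ⊢
          rw [← hp x₀]; exact hx₀
        have hcast : ((x₀.natAbs : ℤ)) = -x₀ := by omega
        rw [hcast]; exact hneg
    exact Finsupp.mem_support_iff.mp hmem
  · intro x hx
    have : x.natAbs ≤ polyDeg p := Finset.le_sup hx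
    omega

lemma polyDeg_mul_symm {p q : L} (hp : PSymm p) (hq : PSymm q) (h0p : p ≠ 0) (h0q : q ≠ 0) :
    polyDeg (p*q) = polyDeg p + polyDeg q := by
  obtain ⟨hcp, hlp⟩ := exists_top hp h0p
  obtain ⟨hcq, hlq⟩ := exists_top hq h0q
  have key := top_coeff_mul p q hlp hlq
  have hne : (p*q).coeff ((polyDeg p : ℤ) + (polyDeg q : ℤ)) ≠ 0 := by
    rw [key]; exact mul_ne_zero hcp hcq
  have hmem := Finsupp.mem_support_iff.mpr hne
  have h1 : ((polyDeg p : ℤ) + (polyDeg q : ℤ)).natAbs ≤ polyDeg (p*q) :=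
    Finset.le_sup hmem
  have h2 := polyDeg_mul_le p q
  omega

lemma polyDeg_pow_symm {p : L} (hp : PSymm p) (h0 : p ≠ 0) (n : ℕ) :
    p^n ≠ 0 ∧ polyDeg (p^n) = n * polyDeg p := by
  induction n with
  | zero =>
    refine ⟨one_ne_zero, ?_⟩
    have hsupp : (1 : L).coeff.support = {0} := by
      rw [AddMonoidAlgebra.one_def, AddMonoidAlgebra.coeff_single]
      exact Finsupp.support_single_ne_zero 0 one_ne_zero
    simp [polyDeg, hsupp]
  | succ n ih =>
    constructor
    · rw [pow_succ]; exact mul_ne_zero ih.1 h0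
    · rw [pow_succ, polyDeg_mul_symm (hp.pow n) hp ih.1 h0, ih.2]; ring

lemma polyDeg_add_eq {p q : L} (h : polyDeg q < polyDeg p) : polyDeg (p+q) = polyDeg p := by
  have h0 : p ≠ 0 := ne_zero_of_polyDeg_pos (by omega)
  have hne : p.coeff.support.Nonempty := Finsupp.support_nonempty_iff.mpr (by simpa using h0)
  obtain ⟨x₀, hx₀, hmax⟩ := Finset.exists_mem_eq_sup p.coeff.support hne (fun x => x.natAbs)
  have hd : polyDeg p = x₀.natAbs := hmax
  have hq0 : q.coeff x₀ = 0 := by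
    by_contra hqc
    have hmem : x₀ ∈ q.coeff.support := Finsupp.mem_support_iff.mpr hqc
    have hle : x₀.natAbs ≤ polyDeg q := Finset.le_sup hmem
    omega
  have hmem : x₀ ∈ (p+q).coeff.support := by
    rw [Finsupp.mem_support_iff, AddMonoidAlgebra.coeff_add, Finsupp.add_apply, hq0, add_zero]
    exact Finsupp.mem_support_iff.mp hx₀
  have h1 : x₀.natAbs ≤ polyDeg (p+q) := Finset.le_sup hmem
  have h2 := polyDeg_add_le p q
  omega

lemma symmEntries_mul {M N : Matrix (Fin 2) (Fin 2) L} (hM : SymmEntries M)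
    (hN : SymmEntries N) : SymmEntries (M*N) := by
  intro i j
  have he : (M*N) i j = M i 0 * N 0 j + M i 1 * N 1 j := by
    rw [Matrix.mul_apply, Fin.sum_univ_two]
  have hP : PSymm ((M*N) i j) := by
    rw [he]
    exact PSymm.add (PSymm.mul (hM i 0) (hN 0 j)) (PSymm.mul (hM i 1) (hN 1 j))
  exact hP

lemma symmEntries_one : SymmEntries (1 : Matrix (Fin 2) (Fin 2) L) := by
  intro i j
  by_cases h : i = j
  · subst h
    simp only [Matrix.one_apply_eq]
    exact psymm_iff.mpr (map_one _)
  · simp only [Matrix.one_apply_ne h]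
    intro x; simp

lemma symmEntries_pow {M : Matrix (Fin 2) (Fin 2) L} (hM : SymmEntries M) (n : ℕ) :
    SymmEntries (M^n) := by
  induction n with
  | zero => simpa using symmEntries_one
  | succ n ih => rw [pow_succ]; exact symmEntries_mul ih hM

lemma vecDeg_le {v : Fin 2 → L} {m : ℕ} (h0 : polyDeg (v 0) ≤ m) (h1 : polyDeg (v 1) ≤ m) :
    vecDeg v ≤ m := max_le h0 h1

lemma comp_smul_add (c : L) (u u' : Fin 2 → L) (j : Fin 2) :
    (c • u + u') j = c * u j + u' j := by
  simp [Pi.smul_apply, smul_eq_mul]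

lemma vecDeg_smul_add (c : L) (u u' : Fin 2 → L) :
    vecDeg (c • u + u') ≤ max (polyDeg c + vecDeg u) (vecDeg u') := by
  apply vecDeg_le <;> rw [comp_smul_add] <;>
  · refine (polyDeg_comb _ _ _).trans ?_
    have h1 : polyDeg (u 0) ≤ vecDeg u := le_max_left _ _
    have h2 : polyDeg (u 1) ≤ vecDeg u := le_max_right _ _
    have h3 : polyDeg (u' 0) ≤ vecDeg u' := le_max_left _ _
    have h4 : polyDeg (u' 1) ≤ vecDeg u' := le_max_right _ _
    omega

lemma mulVec_comp (M : Matrix (Fin 2) (Fin 2) L) (v : Fin 2 → L) (i : Fin 2) :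
    (M *ᵥ v) i = M i 0 * v 0 + M i 1 * v 1 := by
  simp [Matrix.mulVec, dotProduct, Fin.sum_univ_two]

lemma vecDeg_mulVec_le (M : Matrix (Fin 2) (Fin 2) L) (v : Fin 2 → L) :
    vecDeg (M *ᵥ v) ≤ (max (max (polyDeg (M 0 0)) (polyDeg (M 0 1)))
      (max (polyDeg (M 1 0)) (polyDeg (M 1 1)))) + vecDeg v := by
  apply vecDeg_le <;> rw [mulVec_comp] <;>
  · refine (polyDeg_comb2 _ _ _ _).trans ?_
    have h1 : polyDeg (v 0) ≤ vecDeg v := le_max_left _ _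
    have h2 : polyDeg (v 1) ≤ vecDeg v := le_max_right _ _
    omega

end CqcaAux

open CqcaAux

/-- For centered CQCA matrices t and b (det 1, symmetric entries) and
ξ = b·(0,1)ᵀ, if the degree of t^(2^k) ξ eventually exceeds that of ξ, then
lim_{k→∞} deg(t^(2^k) ξ)/2^k = deg(tr t): the asymptotic growth rate of the
stabilizer length is the degree of the trace. -/
theorem cqca_deg_growth_rate_eq_deg_trace
    (t b : Matrix (Fin 2) (Fin 2) (LaurentPolynomial (ZMod 2)))
    (hdt : t.det = 1) (hst : SymmEntries t)
    (hdb : b.det = 1) (hsb : SymmEntries b)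
    (ξ : Fin 2 → LaurentPolynomial (ZMod 2))
    (hξ : ξ = b *ᵥ ![0, 1])
    (hgrow : ∃ k₀ : ℕ, vecDeg ((t ^ (2 ^ k₀)) *ᵥ ξ) > vecDeg ξ) :
    Tendsto (fun k : ℕ => (vecDeg ((t ^ (2 ^ k)) *ᵥ ξ) : ℝ) / (2 ^ k : ℝ)) atTop
      (nhds (polyDeg t.trace : ℝ)) ∧
    Tendsto (fun n : ℕ => (vecDeg ((t ^ n) *ᵥ ξ) : ℝ) / n) atTop
      (nhds (polyDeg t.trace : ℝ)) := by
  obtain ⟨k₀, hk₀⟩ := hgrow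
  set τ : L := t.trace with hτdef
  set d : ℕ := polyDeg t.trace with hddef
  set f : ℕ → ℕ := fun n => vecDeg ((t ^ n) *ᵥ ξ) with hfdef
  set e : ℕ := vecDeg ξ with hedef
  set Dt : ℕ := max (max (polyDeg (t 0 0)) (polyDeg (t 0 1)))
      (max (polyDeg (t 1 0)) (polyDeg (t 1 1))) with hDtdef
  -- symmetry of the trace
  have hτs : PSymm τ := by
    have htr : τ = t 0 0 + t 1 1 := Matrix.trace_fin_two t
    rw [htr]
    exact PSymm.add (hst 0 0) (hst 1 1)
  -- symmetry of components
  have hcomp : ∀ (n : ℕ) (j : Fin 2), PSymm (((t^n) *ᵥ ξ) j) := by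
    intro n j x
    have h1 : (t^n) *ᵥ ξ = ((t^n) * b) *ᵥ ![0,1] := by rw [hξ, Matrix.mulVec_mulVec]
    have h2 : (((t^n) * b) *ᵥ ![0,1]) j = ((t^n) * b) j 1 := by
      simp [Matrix.mulVec, dotProduct, Fin.sum_univ_two]
    have h3 : SymmEntries ((t^n) * b) := symmEntries_mul (symmEntries_pow hst n) hsb
    rw [h1, h2]
    exact h3 j 1 x
  have hcompξ : ∀ j : Fin 2, PSymm (ξ j) := by
    intro j
    have := hcomp 0 j
    simpa using this
  -- squares of 2^k-th powers
  have hsq : ∀ k : ℕ, t^(2^k) * t^(2^k) = (τ^(2^k)) • t^(2^k) + 1 := by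
    intro k
    induction k with
    | zero => simpa using ch t hdt
    | succ k ih =>
      have h2 : (2:ℕ)^(k+1) = 2^k * 2 := by ring
      calc t^(2^(k+1)) * t^(2^(k+1))
          = (t^(2^k) * t^(2^k)) * (t^(2^k) * t^(2^k)) := by
            rw [h2, pow_mul, pow_two]
        _ = ((τ^(2^k)) • t^(2^k) + 1) * ((τ^(2^k)) • t^(2^k) + 1) := by rw [ih]
        _ = (τ^(2^k) * τ^(2^k)) • (t^(2^k) * t^(2^k))
              + ((2:L) * τ^(2^k)) • t^(2^k) + 1 := by
            simp only [add_mul, mul_add, one_mul, mul_one]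
            rw [smul_mul_smul_comm, two_mul, add_smul]
            abel
        _ = (τ^(2^(k+1))) • t^(2^(k+1)) + 1 := by
            rw [two_eq_zero, zero_mul, zero_smul, add_zero, h2, pow_mul, pow_mul,
              pow_two, pow_two]
  have hrecpow : ∀ k : ℕ, (t^(2^(k+1))) *ᵥ ξ = τ^(2^k) • ((t^(2^k)) *ᵥ ξ) + ξ := by
    intro k
    have hm : t^(2^(k+1)) = (τ^(2^k)) • t^(2^k) + 1 := by
      rw [show (2:ℕ)^(k+1) = 2^k*2 by ring, pow_mul, pow_two, hsq k]
    rw [hm, Matrix.add_mulVec, Matrix.one_mulVec, Matrix.smul_mulVec]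
  have hrec2 : ∀ (n : ℕ) (v : Fin 2 → L),
      (t^(n+2)) *ᵥ v = τ • ((t^(n+1)) *ᵥ v) + (t^n) *ᵥ v := by
    intro n v
    have hm : t^(n+2) = τ • t^(n+1) + t^n := by
      calc t^(n+2) = t^n * (t*t) := by rw [pow_succ, pow_succ, mul_assoc]
        _ = t^n * (τ • t + 1) := by rw [ch t hdt]
        _ = τ • t^(n+1) + t^n := by rw [mul_add, mul_one, mul_smul_comm, ← pow_succ]
    rw [hm, Matrix.add_mulVec, Matrix.smul_mulVec]
  -- general upper bound
  have hub : ∀ (n : ℕ) (v : Fin 2 → L),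
      vecDeg ((t^n) *ᵥ v) ≤ max (vecDeg v) (vecDeg (t *ᵥ v)) + n * d := by
    intro n
    induction n using Nat.strong_induction_on with
    | _ n ih =>
      match n with
      | 0 => intro v; simpa using le_max_left (vecDeg v) (vecDeg (t *ᵥ v))
      | 1 =>
        intro v
        simpa using le_trans (le_max_right (vecDeg v) (vecDeg (t *ᵥ v)))
          (Nat.le_add_right _ _)
      | (m+2) =>
        intro v
        rw [hrec2 m v]
        have h1 := vecDeg_smul_add τ ((t^(m+1)) *ᵥ v) ((t^m) *ᵥ v)
        have h2 := ih (m+1) (by omega) v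
        have h3 := ih m (by omega) v
        have hd1 : d + (max (vecDeg v) (vecDeg (t *ᵥ v)) + (m+1) * d)
            = max (vecDeg v) (vecDeg (t *ᵥ v)) + (m+2)*d := by ring
        have hd2 : m*d ≤ (m+2)*d := Nat.mul_le_mul_right d (by omega)
        have hτd : polyDeg τ = d := rfl
        omega
  have hDt : ∀ v : Fin 2 → L, vecDeg (t *ᵥ v) ≤ Dt + vecDeg v := fun v =>
    vecDeg_mulVec_le t v
  have hshift : ∀ n m : ℕ, f (n+m) ≤ f n + Dt + m*d := by
    intro n m
    have h1 : f (n+m) = vecDeg ((t^m) *ᵥ ((t^n) *ᵥ ξ)) := by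
      rw [Matrix.mulVec_mulVec, ← pow_add, Nat.add_comm m n]
    rw [h1]
    have h2 := hub m ((t^n) *ᵥ ξ)
    have h3 := hDt ((t^n) *ᵥ ξ)
    have h4 : f n = vecDeg ((t^n) *ᵥ ξ) := rfl
    omega
  have hup : ∀ n : ℕ, f n ≤ f 0 + Dt + n*d := by
    intro n
    have := hshift 0 n
    simpa using this
  -- main bounds
  have key : ∃ K N : ℕ, ∀ n : ℕ, N ≤ n → (n*d ≤ f n + K ∧ f n ≤ K + n*d) := by
    by_cases hτ0 : τ = 0
    · refine ⟨f 0 + Dt, 0, fun n _ => ⟨?_, hup n⟩⟩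
      have hd0 : d = 0 := by rw [hddef, ← hτdef, hτ0, polyDeg_zero]
      simp [hd0]
    · -- growth step
      have hgs : ∀ k : ℕ, e < f (2^k) → f (2^(k+1)) = 2^k * d + f (2^k) := by
        intro k hM
        obtain ⟨hc0, hcd0⟩ := polyDeg_pow_symm hτs hτ0 (2^k)
        have hcd : polyDeg (τ^(2^k)) = 2^k*d := hcd0
        have hcs : PSymm (τ^(2^k)) := hτs.pow _
        have hfk : f (2^(k+1)) = vecDeg (τ^(2^k) • ((t^(2^k)) *ᵥ ξ) + ξ) := by
          rw [hfdef]; simp only; rw [hrecpow k]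
        set η : Fin 2 → L := (t^(2^k)) *ᵥ ξ with hηdef
        have hMdef : f (2^k) = max (polyDeg (η 0)) (polyDeg (η 1)) := rfl
        have hξj : ∀ j : Fin 2, polyDeg (ξ j) ≤ e := by
          intro j
          fin_cases j
          · exact le_max_left _ _
          · exact le_max_right _ _
        have bound : ∀ j : Fin 2, polyDeg ((τ^(2^k) • η + ξ) j) ≤ 2^k*d + f (2^k) := by
          intro j
          rw [comp_smul_add]
          refine (polyDeg_comb _ _ _).trans ?_
          have h1 : polyDeg (η j) ≤ f (2^k) := by
            fin_cases j
            · rw [hMdef]; exact le_max_left _ _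
            · rw [hMdef]; exact le_max_right _ _
          have h2 := hξj j
          omega
        have keyj : ∀ j : Fin 2, polyDeg (η j) = f (2^k) →
            polyDeg ((τ^(2^k) • η + ξ) j) = 2^k*d + f (2^k) := by
          intro j hj
          rw [comp_smul_add]
          have hη0 : η j ≠ 0 := ne_zero_of_polyDeg_pos (by omega)
          have hmul : polyDeg (τ^(2^k) * η j) = 2^k*d + f (2^k) := by
            rw [polyDeg_mul_symm hcs (hcomp (2^k) j) hc0 hη0, hcd, hj]
          have hlt : polyDeg (ξ j) < polyDeg (τ^(2^k) * η j) := by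
            have := hξj j
            omega
          rw [polyDeg_add_eq hlt, hmul]
        rw [hfk]
        have hor := max_choice (polyDeg (η 0)) (polyDeg (η 1))
        have hv : vecDeg (τ^(2^k) • η + ξ)
            = max (polyDeg ((τ^(2^k) • η + ξ) 0)) (polyDeg ((τ^(2^k) • η + ξ) 1)) := rfl
        rcases hor with h | h
        · have hk0 := keyj 0 (by omega)
          have hb1 := bound 1
          rw [hv]
          omega
        · have hk1 := keyj 1 (by omega)
          have hb0 := bound 0
          rw [hv]
          omega
      have hind : ∀ k : ℕ, k₀ ≤ k →
          (e < f (2^k) ∧ f (2^k) + 2^k₀*d = f (2^k₀) + 2^k*d) := by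
        intro k hk
        induction k, hk using Nat.le_induction with
        | base => exact ⟨hk₀, rfl⟩
        | succ k hk ih =>
          have hstep := hgs k ih.1
          constructor
          · omega
          · have h2 : (2:ℕ)^(k+1)*d = 2^k*d + 2^k*d := by ring
            omega
      refine ⟨f 0 + Dt + 2^k₀*d + f (2^k₀), 2^k₀, fun n hn => ⟨?_, ?_⟩⟩
      · set k : ℕ := Nat.log 2 n with hkdef
        have hn0 : n ≠ 0 := by
          have := Nat.one_le_two_pow (n := k₀)
          omega
        have h1 : 2^k ≤ n := Nat.pow_log_le_self 2 hn0
        have h2 : n < 2^(k+1) := Nat.lt_pow_succ_log_self (by norm_num) n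
        have hkk : k₀ ≤ k := (Nat.le_log_iff_pow_le (by norm_num) hn0).mpr hn
        obtain ⟨-, hcl⟩ := hind (k+1) (by omega)
        have hsh := hshift n (2^(k+1) - n)
        have hnm : n + (2^(k+1)-n) = 2^(k+1) := by omega
        rw [hnm] at hsh
        have harith : (2^(k+1)-n)*d + n*d = 2^(k+1)*d := by
          rw [← Nat.add_mul]
          congr 1
          omega
        omega
      · have := hup n
        omega
  obtain ⟨K, N, hK⟩ := key
  have main2 : Tendsto (fun n : ℕ => (f n : ℝ)/n) atTop (nhds (d : ℝ)) := by
    rw [← tendsto_sub_nhds_zero_iff]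
    refine squeeze_zero_norm' ?_ (tendsto_const_div_atTop_nhds_zero_nat (K:ℝ))
    filter_upwards [eventually_ge_atTop (max N 1)] with n hn
    have hn1 : 1 ≤ n := le_trans (le_max_right _ _) hn
    obtain ⟨hl, hu⟩ := hK n (le_trans (le_max_left _ _) hn)
    have hnpos : (0:ℝ) < n := by exact_mod_cast hn1
    have e1 : (f n : ℝ) ≤ K + n*d := by exact_mod_cast hu
    have e2 : (n:ℝ)*d ≤ f n + K := by exact_mod_cast hl
    have hrw : (f n : ℝ)/n - d = ((f n : ℝ) - n*d)/n := by field_simp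
    rw [Real.norm_eq_abs, hrw, abs_div, abs_of_pos hnpos]
    have habs : |(f n:ℝ) - n*d| ≤ K := by
      rw [abs_le]
      constructor <;> linarith
    exact div_le_div_of_nonneg_right habs hnpos.le
  have main1 : Tendsto (fun k : ℕ => (f (2^k) : ℝ)/(2^k : ℝ)) atTop (nhds (d : ℝ)) := by
    have hpow : Tendsto (fun k : ℕ => 2^k) atTop atTop :=
      tendsto_pow_atTop_atTop_of_one_lt (by norm_num)
    have hcmp := main2.comp hpow
    have heq : (fun k : ℕ => (f (2^k) : ℝ)/(2^k : ℝ))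
        = (fun n : ℕ => (f n : ℝ)/n) ∘ (fun k : ℕ => 2^k) := by
      funext k
      simp only [Function.comp_apply]
      norm_num
    rw [heq]
    exact hcmp
  exact ⟨main1, main2⟩
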